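/- Define, for r > 0 and x^T ∈ ℝ^{n−1}, the cone Cone_r(x^T) = {y ∈ ℝ^{n+1} : |y^⊥| ≤ r, |y^T − x^T| ≤ |y^⊥|} \ S. Let y ∈ B_r with y ∉ Cone_r(0) and y^⊥ ≠ (0,0) (so that 0 < |y^⊥| < |y^T|), and set w = (y^T, (|y^T|/|y^⊥|)·y^⊥), i.e. the point with tangential part y^T and perpendicular part (|y^T|/|y^⊥|)y^⊥. Then: (i) w ∈ Cone_r(0) and w ∈ Cone_r(y^T); (ii) for every z ∈ Cone_r(0), |y − w| ≤ 2|y − z| and |z − w| ≤ 3|y − z|. -/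

import Mathlib

open MeasureTheory Metric Set
open scoped ContDiff ENNReal

noncomputable section

/-- Ambient space `ℝ^{n+1}`. -/
abbrev E (n : ℕ) := EuclideanSpace ℝ (Fin (n + 1))

/-- Index of the paper's coordinate `x_n`. -/
def idxN (n : ℕ) : Fin (n + 1) := ⟨n - 1, by omega⟩
/-- Index of the paper's coordinate `x_{n+1}`. -/
def idxN1 (n : ℕ) : Fin (n + 1) := ⟨n, by omega⟩

/-- The slit `S = {x_n < 0, x_{n+1} = 0}`. -/
def slit (n : ℕ) : Set (E n) := {x | x (idxN n) < 0 ∧ x (idxN1 n) = 0}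

/-- `ρ(x) = |x^⊥| = √(x_n² + x_{n+1}²)`. -/
def rho (n : ℕ) (x : E n) : ℝ := Real.sqrt ((x (idxN n)) ^ 2 + (x (idxN1 n)) ^ 2)

/-- `ξ(x) = √((x_n + ρ(x))/2)`. -/
def xi (n : ℕ) (x : E n) : ℝ := Real.sqrt ((x (idxN n) + rho n x) / 2)

/-- Partial derivative `∂_i f` of a scalar function. -/
def pd (n : ℕ) (f : E n → ℝ) (i : Fin (n + 1)) (x : E n) : ℝ :=
  fderiv ℝ f x (EuclideanSpace.single i 1)

/-- `|∇f(x)|² = ∑ᵢ (∂ᵢf(x))²`. -/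
def gradNormSq (n : ℕ) (f : E n → ℝ) (x : E n) : ℝ := ∑ i, (pd n f i x) ^ 2

/-- Distance between the tangential parts: `|y^T − p^T|`. -/
def tdist (n : ℕ) (y p : E n) : ℝ :=
  Real.sqrt (∑ i : Fin (n + 1), if (i : ℕ) < n - 1 then (y i - p i) ^ 2 else 0)

/-- The cone `Cone_r(x^T) = {y : |y^⊥| ≤ r, |y^T − x^T| ≤ |y^⊥|} \ S`
(the center is given by the tangential part of `p`). -/
def cone (n : ℕ) (r : ℝ) (p : E n) : Set (E n) :=
  {y | rho n y ≤ r ∧ tdist n y p ≤ rho n y} \ slit n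

/-- The projection `x ↦ (x^T, 0, 0)` onto the first `n-1` coordinates. -/
def projT (n : ℕ) (x : E n) : E n :=
  WithLp.toLp 2 (fun i : Fin (n + 1) => if (i : ℕ) < n - 1 then x i else 0)

/-!
The point `w` is obtained from `y` by stretching `y^⊥` until `|w^⊥| = |w^T| = |y^T|`, so it lies
on the boundary of both cones and `|y - w| = |y^T| - |y^⊥|`. For `z ∈ Cone_r(0)`,
`|y^T| ≤ |y^T - z^T| + |z^T| ≤ |y - z| + |z^⊥| ≤ 2|y - z| + |y^⊥|`, which is the first estimate;
the second follows from it by the triangle inequality.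
-/

namespace Cone

variable {n : ℕ}

def pvec (n : ℕ) (x : E n) : E n :=
  WithLp.toLp 2 (fun i : Fin (n + 1) => if (i : ℕ) < n - 1 then 0 else x i)

lemma projT_sub (a b : E n) : projT n (a - b) = projT n a - projT n b := by
  ext i; by_cases h : (i : ℕ) < n - 1 <;> simp [projT, h]

lemma pvec_sub (a b : E n) : pvec n (a - b) = pvec n a - pvec n b := by
  ext i; by_cases h : (i : ℕ) < n - 1 <;> simp [pvec, h]

lemma projT_projT (a : E n) : projT n (projT n a) = projT n a := by
  ext i; by_cases h : (i : ℕ) < n - 1 <;> simp [projT, h]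

lemma projT_add_pvec (a : E n) : projT n a + pvec n a = a := by
  ext i; by_cases h : (i : ℕ) < n - 1 <;> simp [projT, pvec, h]

lemma norm_projT_le (a : E n) : ‖projT n a‖ ≤ ‖a‖ := by
  rw [EuclideanSpace.norm_eq, EuclideanSpace.norm_eq]
  refine Real.sqrt_le_sqrt (Finset.sum_le_sum fun i _ => ?_)
  by_cases h : (i : ℕ) < n - 1 <;> simp [projT, h, sq_nonneg]

lemma norm_pvec_le (a : E n) : ‖pvec n a‖ ≤ ‖a‖ := by
  rw [EuclideanSpace.norm_eq, EuclideanSpace.norm_eq]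
  refine Real.sqrt_le_sqrt (Finset.sum_le_sum fun i _ => ?_)
  by_cases h : (i : ℕ) < n - 1 <;> simp [pvec, h, sq_nonneg]

lemma tdist_eq_norm_projT_sub (a b : E n) : tdist n a b = ‖projT n a - projT n b‖ := by
  rw [← projT_sub, EuclideanSpace.norm_eq, tdist]
  congr 1
  refine Finset.sum_congr rfl fun i _ => ?_
  by_cases h : (i : ℕ) < n - 1 <;> simp [projT, h]

lemma tdist_triangle (a b c : E n) : tdist n a c ≤ tdist n a b + tdist n b c := by
  simp only [tdist_eq_norm_projT_sub]
  exact norm_sub_le_norm_sub_add_norm_sub _ _ _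

lemma tdist_le_norm_sub (a b : E n) : tdist n a b ≤ ‖a - b‖ := by
  rw [tdist_eq_norm_projT_sub, ← projT_sub]
  exact norm_projT_le _

lemma norm_pvec (hn : 1 ≤ n) (a : E n) : ‖pvec n a‖ = rho n a := by
  rw [EuclideanSpace.norm_eq, rho, ← Finset.sum_filter_add_sum_filter_not _
    (fun i : Fin (n + 1) => (i : ℕ) < n - 1)]
  have hfilter : Finset.univ.filter (fun i : Fin (n + 1) => ¬(i : ℕ) < n - 1)
      = {idxN n, idxN1 n} := by
    ext i
    simp only [Finset.mem_filter, Finset.mem_univ, true_and, Finset.mem_insert,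
      Finset.mem_singleton, idxN, idxN1, Fin.ext_iff]
    omega
  have hidx : idxN n ≠ idxN1 n := by simp only [idxN, idxN1, Ne, Fin.mk.injEq]; omega
  rw [Finset.sum_eq_zero fun i hi => by simp [pvec, (Finset.mem_filter.1 hi).2], zero_add,
    hfilter, Finset.sum_pair hidx]
  have hlast : ¬n < n - 1 := by omega
  simp [pvec, idxN, idxN1, hlast]

lemma rho_le_norm (hn : 1 ≤ n) (a : E n) : rho n a ≤ ‖a‖ :=
  norm_pvec hn a ▸ norm_pvec_le a

lemma rho_le_rho_add_norm_sub (hn : 1 ≤ n) (a b : E n) : rho n a ≤ rho n b + ‖a - b‖ := by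
  rw [← norm_pvec hn, ← norm_pvec hn]
  calc ‖pvec n a‖ ≤ ‖pvec n b‖ + ‖pvec n a - pvec n b‖ := norm_le_norm_add_norm_sub' _ _
    _ ≤ ‖pvec n b‖ + ‖a - b‖ := by gcongr; rw [← pvec_sub]; exact norm_pvec_le _

lemma rho_pos_iff (a : E n) : 0 < rho n a ↔ ¬(a (idxN n) = 0 ∧ a (idxN1 n) = 0) := by
  have hsum := add_nonneg (sq_nonneg (a (idxN n))) (sq_nonneg (a (idxN1 n)))
  rw [rho, Real.sqrt_pos, ← not_le, hsum.ge_iff_eq, eq_comm,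
    add_eq_zero_iff_of_nonneg (sq_nonneg _) (sq_nonneg _), sq_eq_zero_iff, sq_eq_zero_iff]

/-- Any point of a cone bounds how far `y` is from being in that cone. -/
lemma tdist_sub_rho_le_of_mem_cone (hn : 1 ≤ n) {r : ℝ} {p z : E n} (hz : z ∈ cone n r p)
    (y : E n) : tdist n y p - rho n y ≤ 2 * ‖y - z‖ := by
  have hzy := rho_le_rho_add_norm_sub hn z y
  rw [norm_sub_rev] at hzy
  linarith [tdist_triangle y z p, tdist_le_norm_sub y z, hz.1.2]

section Stretch

variable {c : ℝ} {y w : E n}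
  (hw : ∀ i : Fin (n + 1), w i = if (i : ℕ) < n - 1 then y i else c * y i)
include hw

lemma projT_eq_of_stretch : projT n w = projT n y := by
  ext i; by_cases h : (i : ℕ) < n - 1 <;> simp [projT, hw i, h]

lemma pvec_eq_smul_of_stretch : pvec n w = c • pvec n y := by
  ext i; by_cases h : (i : ℕ) < n - 1 <;> simp [pvec, hw i, h]

lemma rho_of_stretch (hn : 1 ≤ n) : rho n w = |c| * rho n y := by
  rw [← norm_pvec hn, pvec_eq_smul_of_stretch hw, norm_smul, norm_pvec hn, Real.norm_eq_abs]

lemma norm_sub_of_stretch (hn : 1 ≤ n) : ‖y - w‖ = |1 - c| * rho n y := by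
  have hyw : y - w = (1 - c) • pvec n y := by
    conv_lhs => rw [← projT_add_pvec y, ← projT_add_pvec w]
    rw [projT_eq_of_stretch hw, pvec_eq_smul_of_stretch hw, sub_smul, one_smul]
    abel
  rw [hyw, norm_smul, norm_pvec hn, Real.norm_eq_abs]

lemma notMem_slit_of_stretch (hc : 0 < c) (hy : y ∉ slit n) : w ∉ slit n := by
  rintro ⟨hwn, hwn1⟩
  have hN : ¬((idxN n : ℕ) < n - 1) := by simp [idxN]
  have hN1 : ¬((idxN1 n : ℕ) < n - 1) := by simp [idxN1]
  rw [hw, if_neg hN] at hwn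
  rw [hw, if_neg hN1] at hwn1
  exact hy ⟨neg_of_mul_neg_right hwn hc.le, (mul_eq_zero.1 hwn1).resolve_left hc.ne'⟩

end Stretch

end Cone

open Cone in
theorem stmt19_general (n : ℕ) (hn : 2 ≤ n) (r : ℝ) (y : E n)
    (hy : y ∈ ball (0 : E n) r) (hyS : y ∉ slit n)
    (hyc : y ∉ cone n r 0) (hperp : ¬(y (idxN n) = 0 ∧ y (idxN1 n) = 0)) :
    ∀ w : E n,
      (∀ i : Fin (n + 1),
        w i = if (i : ℕ) < n - 1 then y i else (tdist n y 0 / rho n y) * y i) →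
      (w ∈ cone n r 0 ∧ w ∈ cone n r (projT n y)) ∧
        ∀ z ∈ cone n r 0, ‖y - w‖ ≤ 2 * ‖y - z‖ ∧ ‖z - w‖ ≤ 3 * ‖y - z‖ := by
  intro w hw
  have hn1 : 1 ≤ n := by omega
  set t := tdist n y 0
  set ρ := rho n y
  have hyr : ‖y‖ < r := mem_ball_zero_iff.1 hy
  have htr : t < r := (tdist_le_norm_sub y 0).trans_lt (by rwa [sub_zero])
  have hρ : 0 < ρ := (rho_pos_iff y).2 hperp
  have hρt : ρ < t := not_le.1 fun h => hyc ⟨⟨(rho_le_norm hn1 y).trans hyr.le, h⟩, hyS⟩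
  have hc : 1 < t / ρ := (one_lt_div hρ).2 hρt
  have hwρ : rho n w = t := by
    rw [rho_of_stretch hw hn1, abs_of_pos (by linarith), div_mul_cancel₀ _ hρ.ne']
  have hwS : w ∉ slit n := notMem_slit_of_stretch hw (by linarith) hyS
  have hyw : ‖y - w‖ = t - ρ := by
    rw [norm_sub_of_stretch hw hn1, abs_of_neg (by linarith), neg_sub, sub_mul,
      div_mul_cancel₀ _ hρ.ne', one_mul]
  refine ⟨⟨⟨⟨hwρ.trans_le htr.le, ?_⟩, hwS⟩, ⟨⟨hwρ.trans_le htr.le, ?_⟩, hwS⟩⟩, fun z hz => ?_⟩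
  · rw [hwρ, tdist_eq_norm_projT_sub, projT_eq_of_stretch hw, ← tdist_eq_norm_projT_sub]
  · rw [hwρ, tdist_eq_norm_projT_sub, projT_eq_of_stretch hw, projT_projT, sub_self, norm_zero]
    linarith
  have hkey : ‖y - w‖ ≤ 2 * ‖y - z‖ := hyw ▸ tdist_sub_rho_le_of_mem_cone hn1 hz y
  refine ⟨hkey, ?_⟩
  calc ‖z - w‖ ≤ ‖z - y‖ + ‖y - w‖ := norm_sub_le_norm_sub_add_norm_sub _ _ _
    _ ≤ 3 * ‖y - z‖ := by rw [norm_sub_rev z y]; linarith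

/-- projection onto the cone.
For `y ∈ B_r \ (S ∪ Cone_r(0))` with `y^⊥ ≠ 0`, the point
`w = (y^T, (|y^T|/|y^⊥|)·y^⊥)` lies in `Cone_r(0) ∩ Cone_r(y^T)`, and for every
`z ∈ Cone_r(0)` one has `|y − w| ≤ 2|y − z|` and `|z − w| ≤ 3|y − z|`. -/
theorem stmt19 (n : ℕ) (hn : 2 ≤ n) (r : ℝ) (hr : 0 < r) (y : E n)
    (hy : y ∈ ball (0 : E n) r) (hyS : y ∉ slit n)
    (hyc : y ∉ cone n r 0) (hperp : ¬(y (idxN n) = 0 ∧ y (idxN1 n) = 0)) :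
    ∀ w : E n,
      (∀ i : Fin (n + 1),
        w i = if (i : ℕ) < n - 1 then y i else (tdist n y 0 / rho n y) * y i) →
      (w ∈ cone n r 0 ∧ w ∈ cone n r (projT n y)) ∧
        ∀ z ∈ cone n r 0, ‖y - w‖ ≤ 2 * ‖y - z‖ ∧ ‖z - w‖ ≤ 3 * ‖y - z‖ :=
  stmt19_general n hn r y hy hyS hyc hperp
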